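/- arXiv:2211.15431 — 3 statements merged into one kernel-verified Lean document; each statement's English description precedes it below -/
import Mathlib

section
/- The set of fixed points of Ψ^T, i.e. {(K*, P*, τ*) ∈ 𝔻^T : (K*, P*, τ*) = Ψ^T(K*, P*, τ*)}, is nonempty and forms a complete lattice in 𝔻^T under the componentwise order; in particular there exist a greatest clearing solution (K^↑, P^↑, τ^↑) and a least clearing solution (K^↓, P^↓, τ^↓) with (K^↓, P^↓, τ^↓) ≤ (K^↑, P^↑, τ^↑). -/
/-!
Dropping adaptedness from `𝔻^T` and relaxing `τ` from the grid `{t_0, ..., t_ℓ, T + 1}` to the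
interval `[t_0, T + 1]` leaves a box `[boxLo, boxHi]` of triples, which is a complete lattice, and
`Ψ^T` is a monotone self-map of that box, so by Knaster–Tarski its fixed points form a complete
lattice. These are exactly the clearing solutions: every point of `𝔻^T` lies in
the box, and a fixed point in the box is in `𝔻^T` because `P = ℙ(τ > T | 𝓕)` is adapted, hence
so is `K = Ψ^T_K(P)`, while `Ψ^T_τ` only takes values in `{t_0, ..., t_ℓ, T + 1}`.
-/

open MeasureTheory

namespace Paper

open Classical in
/-- real-valued indicator of a proposition -/
noncomputable def indR (p : Prop) : ℝ := if p then 1 else 0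

open Classical in
/-- boolean indicator of a proposition -/
noncomputable def indB (p : Prop) : Bool := if p then true else false

/-- The atom of the σ-algebra `m` containing the point `ω`:
the intersection of all `m`-measurable sets containing `ω`. -/
def atomOf {Ω : Type*} (m : MeasurableSpace Ω) (ω : Ω) : Set Ω :=
  ⋂₀ {s : Set Ω | MeasurableSet[m] s ∧ ω ∈ s}

/-- The set `S`, with the order induced from the ambient preorder, is a nonempty complete
lattice: it has a greatest and a least element and every subset of `S` has a least upper
bound and a greatest lower bound within `S`. -/
def LatticeStructure {X : Type*} [Preorder X] (S : Set X) : Prop :=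
  S.Nonempty ∧
  (∃ top ∈ S, ∀ z ∈ S, z ≤ top) ∧
  (∃ bot ∈ S, ∀ z ∈ S, bot ≤ z) ∧
  (∀ A ⊆ S,
    (∃ u ∈ S, (∀ a ∈ A, a ≤ u) ∧ ∀ w ∈ S, (∀ a ∈ A, a ≤ w) → u ≤ w) ∧
    (∃ v ∈ S, (∀ a ∈ A, v ≤ a) ∧ ∀ w ∈ S, (∀ a ∈ A, w ≤ a) → w ≤ v))

/-- The space of triples `(K, P, τ)`: capital process, survival-probability process,
default-time vector, with the componentwise (pointwise) order. -/
abbrev Tri (Ω : Type*) (n ℓ : ℕ) :=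
  (Fin (ℓ+1) → Ω → Fin n → ℝ) × (Fin (ℓ+1) → Ω → Fin n → ℝ) × (Fin n → Ω → ℝ)

/-- Data of the single-maturity interbank model. -/
structure SM (Ω : Type*) (n ℓ : ℕ) where
  /-- maturity -/
  T : ℝ
  /-- times `0 = t 0 < t 1 < ... < t ℓ = T` -/
  t : Fin (ℓ+1) → ℝ
  /-- external asset process -/
  x : Fin (ℓ+1) → Ω → Fin n → ℝ
  /-- interbank liabilities -/
  L : Fin n → Fin n → ℝ
  /-- external liabilities -/
  L0 : Fin n → ℝ
  /-- recovery rate -/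
  β : ℝ
  /-- risk-free rate -/
  r : ℝ

namespace SM

variable {Ω : Type*} {n ℓ : ℕ}

/-- total liabilities `p̄_i` -/
noncomputable def pbar (M : SM Ω n ℓ) (i : Fin n) : ℝ := (∑ j, M.L i j) + M.L0 i

/-- discount factor `e^{-r (T - t l)}` -/
noncomputable def disc (M : SM Ω n ℓ) (l : Fin (ℓ+1)) : ℝ :=
  Real.exp (-(M.r * (M.T - M.t l)))

/-- the capital component `Ψ^T_K` of the clearing map -/
noncomputable def ΨK (M : SM Ω n ℓ) (l : Fin (ℓ+1)) (Pt : Ω → Fin n → ℝ)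
    (ω : Ω) (i : Fin n) : ℝ :=
  M.x l ω i + M.disc l * (∑ j, M.L j i * (M.β + (1 - M.β) * Pt ω j))
    - M.disc l * M.pbar i

/-- the default-time component `Ψ^T_τ` of the clearing map: the first time `t l` at which
the capital of bank `i` is negative, and `T + 1` if the capital stays nonnegative -/
noncomputable def Ψτ (M : SM Ω n ℓ) (K : Fin (ℓ+1) → Ω → Fin n → ℝ)
    (i : Fin n) (ω : Ω) : ℝ :=
  sInf (insert (M.T + 1) ((fun l => M.t l) '' {l : Fin (ℓ+1) | K l ω i < 0}))

/-- the survival-probability component `Ψ^T_P` of the clearing map: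
`ℙ(τ_i > T | 𝓕 l)` -/
noncomputable def ΨP [MeasurableSpace Ω] (M : SM Ω n ℓ)
    (𝓕 : Fin (ℓ+1) → MeasurableSpace Ω) (μ : Measure Ω)
    (τ : Fin n → Ω → ℝ) (l : Fin (ℓ+1)) (ω : Ω) (i : Fin n) : ℝ :=
  (μ[fun ω' => indR (M.T < τ i ω') | 𝓕 l]) ω

/-- membership in the domain `𝔻^T`: adaptedness, the balance-sheet bounds on `K`,
`P` valued in `[0,1]`, and `τ` valued in `{t_0, ..., t_ℓ, T+1}` -/
def memD [MeasurableSpace Ω] (M : SM Ω n ℓ) (𝓕 : Fin (ℓ+1) → MeasurableSpace Ω)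
    (K P : Fin (ℓ+1) → Ω → Fin n → ℝ) (τ : Fin n → Ω → ℝ) : Prop :=
  (∀ l i, Measurable[𝓕 l] fun ω => K l ω i) ∧
  (∀ l i, Measurable[𝓕 l] fun ω => P l ω i) ∧
  (∀ l ω i, M.x l ω i - M.disc l * M.pbar i ≤ K l ω i) ∧
  (∀ l ω i, K l ω i ≤ M.x l ω i + M.disc l * ((∑ j, M.L j i) - M.pbar i)) ∧
  (∀ l ω i, 0 ≤ P l ω i ∧ P l ω i ≤ 1) ∧
  (∀ i ω, (∃ l, τ i ω = M.t l) ∨ τ i ω = M.T + 1)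

/-- the clearing map `Ψ^T` -/
noncomputable def Ψmap [MeasurableSpace Ω] (M : SM Ω n ℓ)
    (𝓕 : Fin (ℓ+1) → MeasurableSpace Ω) (μ : Measure Ω) (z : Tri Ω n ℓ) : Tri Ω n ℓ :=
  (fun l ω i => M.ΨK l (z.2.1 l) ω i,
   fun l ω i => M.ΨP 𝓕 μ z.2.2 l ω i,
   fun i ω => M.Ψτ z.1 i ω)

/-- the set of clearing solutions: fixed points of `Ψ^T` in `𝔻^T` -/
def clearingSet [MeasurableSpace Ω] (M : SM Ω n ℓ)
    (𝓕 : Fin (ℓ+1) → MeasurableSpace Ω) (μ : Measure Ω) : Set (Tri Ω n ℓ) :=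
  {z | M.memD 𝓕 z.1 z.2.1 z.2.2 ∧ M.Ψmap 𝓕 μ z = z}

/-- Standing assumptions of the single-maturity model. -/
structure Valid [MeasurableSpace Ω] (M : SM Ω n ℓ)
    (𝓕 : Fin (ℓ+1) → MeasurableSpace Ω) (μ : Measure Ω) : Prop where
  hn : 1 ≤ n
  hTop : (inferInstance : MeasurableSpace Ω) = ⊤
  hprob : IsProbabilityMeasure μ
  hpos : ∀ ω : Ω, 0 < μ {ω}
  hmono : Monotone 𝓕
  h0 : 𝓕 0 = ⊥
  hlast : 𝓕 (Fin.last ℓ) = (inferInstance : MeasurableSpace Ω)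
  ht : StrictMono M.t
  ht0 : M.t 0 = 0
  htT : M.t (Fin.last ℓ) = M.T
  hx : ∀ l i, Measurable[𝓕 l] fun ω => M.x l ω i
  hx0 : ∀ l ω i, 0 ≤ M.x l ω i
  hL : ∀ i j, 0 ≤ M.L i j
  hLd : ∀ i, M.L i i = 0
  hL0 : ∀ i, 0 ≤ M.L0 i
  hβ0 : 0 ≤ M.β
  hβ1 : M.β ≤ 1
  hr : 0 ≤ M.r

end SM

instance Prod.conditionallyCompleteLattice {α β : Type*} [ConditionallyCompleteLattice α]
    [ConditionallyCompleteLattice β] : ConditionallyCompleteLattice (α × β) where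
  isLUB_csSup _ hne hbdd := isLUB_prod.mpr
    ⟨isLUB_csSup (hne.image _) (monotone_fst.map_bddAbove hbdd),
      isLUB_csSup (hne.image _) (monotone_snd.map_bddAbove hbdd)⟩
  isGLB_csInf _ hne hbdd := isGLB_prod.mpr
    ⟨isGLB_csInf (hne.image _) (monotone_fst.map_bddBelow hbdd),
      isGLB_csInf (hne.image _) (monotone_snd.map_bddBelow hbdd)⟩

section CompleteLattice

variable {X C : Type*} [Preorder X] [CompleteLattice C]

lemma exists_isLUB_mem_range (e : C ↪o X) {A : Set X} (hA : A ⊆ Set.range e) :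
    ∃ u ∈ Set.range e, (∀ a ∈ A, a ≤ u) ∧ ∀ w ∈ Set.range e, (∀ a ∈ A, a ≤ w) → u ≤ w := by
  refine ⟨e (sSup (e ⁻¹' A)), Set.mem_range_self _, fun a ha => ?_, ?_⟩
  · obtain ⟨c, rfl⟩ := hA ha
    exact e.le_iff_le.2 (le_sSup ha)
  · rintro _ ⟨d, rfl⟩ hub
    exact e.le_iff_le.2 (sSup_le fun c hc => e.le_iff_le.1 (hub _ hc))

lemma latticeStructure_range (e : C ↪o X) : LatticeStructure (Set.range e) := by
  have hsup := fun A (hA : A ⊆ Set.range e) => exists_isLUB_mem_range e hA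
  have hinf := fun A (hA : A ⊆ Set.range e) => exists_isLUB_mem_range e.dual hA
  obtain ⟨top, htop, hle_top, -⟩ := hsup _ subset_rfl
  obtain ⟨bot, hbot, hbot_le, -⟩ := hinf _ subset_rfl
  exact ⟨⟨top, htop⟩, ⟨top, htop, hle_top⟩, ⟨bot, hbot, hbot_le⟩,
    fun A hA => ⟨hsup A hA, hinf A hA⟩⟩

end CompleteLattice

theorem latticeStructure_fixedPoints_Icc {X : Type*} [ConditionallyCompleteLattice X] {a b : X}
    (hab : a ≤ b) {f : X → X} (hf : Monotone f) (hmaps : Set.MapsTo f (Set.Icc a b) (Set.Icc a b)) :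
    LatticeStructure {z ∈ Set.Icc a b | f z = z} := by
  have : Fact (a ≤ b) := ⟨hab⟩
  let g : Set.Icc a b →o Set.Icc a b := ⟨hmaps.restrict, fun _ _ h => hf h⟩
  let e : Function.fixedPoints g ↪o X :=
    (OrderEmbedding.subtype _).trans (OrderEmbedding.subtype _)
  convert latticeStructure_range e
  ext z
  constructor
  · rintro ⟨hz, hfix⟩
    exact ⟨⟨⟨z, hz⟩, Subtype.ext hfix⟩, rfl⟩
  · rintro ⟨⟨⟨z, hz⟩, hfix⟩, rfl⟩
    exact ⟨hz, congrArg Subtype.val hfix⟩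

lemma indR_nonneg (p : Prop) : 0 ≤ indR p := by
  unfold indR; split_ifs <;> norm_num

lemma indR_le_one (p : Prop) : indR p ≤ 1 := by
  unfold indR; split_ifs <;> norm_num

lemma indR_mono {p q : Prop} (h : p → q) : indR p ≤ indR q := by
  unfold indR; split_ifs <;> simp_all

namespace SM

variable {Ω : Type*} {n ℓ : ℕ} (M : SM Ω n ℓ)

noncomputable def boxLo : Tri Ω n ℓ :=
  (fun l ω i => M.x l ω i - M.disc l * M.pbar i, fun _ _ _ => 0, fun _ _ => M.t 0)

noncomputable def boxHi : Tri Ω n ℓ :=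
  (fun l ω i => M.x l ω i + M.disc l * ((∑ j, M.L j i) - M.pbar i), fun _ _ _ => 1,
    fun _ _ => M.T + 1)

lemma disc_nonneg (l : Fin (ℓ+1)) : 0 ≤ M.disc l := (Real.exp_pos _).le

lemma ΨK_mono (hL : ∀ i j, 0 ≤ M.L i j) (hβ1 : M.β ≤ 1) (l : Fin (ℓ+1)) :
    Monotone (M.ΨK l) := by
  intro P P' hP ω i
  have hsum : ∑ j, M.L j i * (M.β + (1 - M.β) * P ω j)
      ≤ ∑ j, M.L j i * (M.β + (1 - M.β) * P' ω j) := by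
    gcongr with j
    · exact hL j i
    · exact hP ω j
  unfold ΨK
  linarith [mul_le_mul_of_nonneg_left hsum (M.disc_nonneg l)]

lemma ΨK_mem_Icc (hL : ∀ i j, 0 ≤ M.L i j) (hβ0 : 0 ≤ M.β) (hβ1 : M.β ≤ 1) (l : Fin (ℓ+1))
    {P : Ω → Fin n → ℝ} (hP : ∀ ω j, P ω j ∈ Set.Icc 0 1) (ω : Ω) (i : Fin n) :
    M.ΨK l P ω i ∈ Set.Icc (M.boxLo.1 l ω i) (M.boxHi.1 l ω i) := by
  have hterm : ∀ j, M.L j i * (M.β + (1 - M.β) * P ω j) ∈ Set.Icc 0 (M.L j i) := fun j => by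
    obtain ⟨hP0, hP1⟩ := hP ω j
    constructor
    · exact mul_nonneg (hL j i) (by nlinarith)
    · exact mul_le_of_le_one_right (hL j i) (by nlinarith)
  have hsum0 := Finset.sum_nonneg fun j (_ : j ∈ Finset.univ) => (hterm j).1
  have hsum1 := Finset.sum_le_sum fun j (_ : j ∈ Finset.univ) => (hterm j).2
  have hd := M.disc_nonneg l
  simp only [ΨK, boxLo, boxHi, Set.mem_Icc]
  constructor <;> nlinarith

lemma Ψτ_mono : Monotone M.Ψτ := fun _ _ hK i ω =>
  csInf_le_csInf (Set.toFinite _).bddBelow (Set.insert_nonempty _ _)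
    (Set.insert_subset_insert (Set.image_mono fun l hl => (hK l ω i).trans_lt hl))

lemma Ψτ_mem_grid (K : Fin (ℓ+1) → Ω → Fin n → ℝ) (i : Fin n) (ω : Ω) :
    (∃ l, M.Ψτ K i ω = M.t l) ∨ M.Ψτ K i ω = M.T + 1 := by
  rcases (Set.insert_nonempty (M.T + 1) ((fun l => M.t l) '' {l | K l ω i < 0})).csInf_mem
    (Set.toFinite _) with h | ⟨l, -, hl⟩
  · exact Or.inr h
  · exact Or.inl ⟨l, hl.symm⟩

lemma measurable_ΨK {m : MeasurableSpace Ω} {l : Fin (ℓ+1)} {P : Ω → Fin n → ℝ} {i : Fin n}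
    (hx : Measurable[m] fun ω => M.x l ω i) (hP : ∀ j, Measurable[m] fun ω => P ω j) :
    Measurable[m] fun ω => M.ΨK l P ω i := by
  unfold ΨK
  fun_prop

section Conditioning

variable [MeasurableSpace Ω] [Finite Ω] [MeasurableSingletonClass Ω]
  (𝓕 : Fin (ℓ+1) → MeasurableSpace Ω) {μ : Measure Ω}

lemma ΨP_mono [IsFiniteMeasure μ] (hpos : ∀ ω, 0 < μ {ω}) (l : Fin (ℓ+1)) :
    Monotone fun τ => M.ΨP 𝓕 μ τ l := by
  intro τ τ' hτ ω i
  have hae : μ[fun ω' => indR (M.T < τ i ω') | 𝓕 l] ≤ᵐ[μ]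
      μ[fun ω' => indR (M.T < τ' i ω') | 𝓕 l] :=
    condExp_mono .of_finite .of_finite
      (.of_forall fun ω' => indR_mono fun h => h.trans_le (hτ i ω'))
  exact ae_iff_of_countable.1 hae ω (hpos ω).ne'

lemma ΨP_mem_Icc [IsProbabilityMeasure μ] (hpos : ∀ ω, 0 < μ {ω}) {l : Fin (ℓ+1)}
    (h𝓕 : 𝓕 l ≤ ‹MeasurableSpace Ω›) (τ : Fin n → Ω → ℝ) (ω : Ω) (i : Fin n) :
    M.ΨP 𝓕 μ τ l ω i ∈ Set.Icc 0 1 := by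
  have hnonneg : 0 ≤ᵐ[μ] μ[fun ω' => indR (M.T < τ i ω') | 𝓕 l] :=
    condExp_nonneg (.of_forall fun _ => indR_nonneg _)
  have hle_one : μ[fun ω' => indR (M.T < τ i ω') | 𝓕 l] ≤ᵐ[μ] μ[fun _ => (1 : ℝ) | 𝓕 l] :=
    condExp_mono .of_finite .of_finite (.of_forall fun _ => indR_le_one _)
  rw [condExp_const h𝓕] at hle_one
  exact ⟨ae_iff_of_countable.1 hnonneg ω (hpos ω).ne',
    ae_iff_of_countable.1 hle_one ω (hpos ω).ne'⟩

end Conditioning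

namespace Valid

variable {M} [MeasurableSpace Ω] {𝓕 : Fin (ℓ+1) → MeasurableSpace Ω} {μ : Measure Ω}
  (hM : M.Valid 𝓕 μ)
include hM

lemma measurableSingletonClass : MeasurableSingletonClass Ω := by
  have htop : ‹MeasurableSpace Ω› = ⊤ := hM.hTop
  exact ⟨fun _ => htop ▸ MeasurableSpace.measurableSet_top⟩

lemma filtration_le (l : Fin (ℓ+1)) : 𝓕 l ≤ ‹MeasurableSpace Ω› := by
  have hlast : 𝓕 (Fin.last ℓ) = ‹MeasurableSpace Ω› := hM.hlast
  exact hlast ▸ hM.hmono (Fin.le_last l)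

lemma mem_Icc_of_grid {s : ℝ} (hs : (∃ l, s = M.t l) ∨ s = M.T + 1) :
    s ∈ Set.Icc (M.t 0) (M.T + 1) := by
  have ht_le_T (l : Fin (ℓ+1)) : M.t l ≤ M.T := hM.htT ▸ hM.ht.monotone (Fin.le_last l)
  rcases hs with ⟨l, rfl⟩ | rfl
  · exact ⟨hM.ht.monotone (Fin.zero_le l), by linarith [ht_le_T l]⟩
  · exact ⟨by linarith [ht_le_T 0], le_rfl⟩

end Valid

variable {M} [MeasurableSpace Ω] {𝓕 : Fin (ℓ+1) → MeasurableSpace Ω} {μ : Measure Ω}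

lemma boxLo_le_boxHi (hM : M.Valid 𝓕 μ) : M.boxLo ≤ M.boxHi := by
  refine ⟨fun l ω i => ?_, fun _ _ _ => zero_le_one, fun _ _ => ?_⟩
  · have := mul_nonneg (M.disc_nonneg l)
      (Finset.sum_nonneg fun j (_ : j ∈ Finset.univ) => hM.hL j i)
    simp only [boxLo, boxHi]
    linarith
  · exact (hM.mem_Icc_of_grid (Or.inr rfl)).1

lemma Ψmap_monotone [Finite Ω] (hM : M.Valid 𝓕 μ) : Monotone (M.Ψmap 𝓕 μ) := by
  have := hM.measurableSingletonClass
  have := hM.hprob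
  intro z w h
  exact ⟨fun l => M.ΨK_mono hM.hL hM.hβ1 l (h.2.1 l), fun l => M.ΨP_mono 𝓕 hM.hpos l h.2.2,
    M.Ψτ_mono h.1⟩

lemma mapsTo_Ψmap [Finite Ω] (hM : M.Valid 𝓕 μ) :
    Set.MapsTo (M.Ψmap 𝓕 μ) (Set.Icc M.boxLo M.boxHi) (Set.Icc M.boxLo M.boxHi) := by
  have := hM.measurableSingletonClass
  have := hM.hprob
  intro z hz
  have hK l ω i := M.ΨK_mem_Icc hM.hL hM.hβ0 hM.hβ1 l
    (fun ω j => ⟨hz.1.2.1 l ω j, hz.2.2.1 l ω j⟩) ω i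
  have hP l ω i := M.ΨP_mem_Icc 𝓕 hM.hpos (hM.filtration_le l) z.2.2 ω i
  have hτ i ω := hM.mem_Icc_of_grid (M.Ψτ_mem_grid z.1 i ω)
  exact ⟨⟨fun l ω i => (hK l ω i).1, fun l ω i => (hP l ω i).1, fun i ω => (hτ i ω).1⟩,
    ⟨fun l ω i => (hK l ω i).2, fun l ω i => (hP l ω i).2, fun i ω => (hτ i ω).2⟩⟩

lemma mem_box_of_memD (hM : M.Valid 𝓕 μ) {z : Tri Ω n ℓ} (hz : M.memD 𝓕 z.1 z.2.1 z.2.2) :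
    z ∈ Set.Icc M.boxLo M.boxHi := by
  obtain ⟨-, -, hK_lo, hK_hi, hP, hτ⟩ := hz
  exact ⟨⟨hK_lo, fun l ω i => (hP l ω i).1, fun i ω => (hM.mem_Icc_of_grid (hτ i ω)).1⟩,
    ⟨hK_hi, fun l ω i => (hP l ω i).2, fun i ω => (hM.mem_Icc_of_grid (hτ i ω)).2⟩⟩

lemma memD_of_mem_box_of_isFixedPt (hM : M.Valid 𝓕 μ) {z : Tri Ω n ℓ}
    (hz : z ∈ Set.Icc M.boxLo M.boxHi) (hfix : M.Ψmap 𝓕 μ z = z) :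
    M.memD 𝓕 z.1 z.2.1 z.2.2 := by
  obtain ⟨K, P, τ⟩ := z
  have hK : (fun l ω i => M.ΨK l (P l) ω i) = K := congrArg (·.1) hfix
  have hP : (fun l ω i => M.ΨP 𝓕 μ τ l ω i) = P := congrArg (·.2.1) hfix
  have hτ : (fun i ω => M.Ψτ K i ω) = τ := congrArg (·.2.2) hfix
  subst hK hP
  exact ⟨fun l i => M.measurable_ΨK (hM.hx l i) fun _ => stronglyMeasurable_condExp.measurable,
    fun _ _ => stronglyMeasurable_condExp.measurable, hz.1.1, hz.2.1,
    fun l ω i => ⟨hz.1.2.1 l ω i, hz.2.2.1 l ω i⟩, fun i ω => hτ ▸ M.Ψτ_mem_grid _ i ω⟩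

lemma clearingSet_eq (hM : M.Valid 𝓕 μ) :
    M.clearingSet 𝓕 μ = {z ∈ Set.Icc M.boxLo M.boxHi | M.Ψmap 𝓕 μ z = z} :=
  Set.ext fun _ => ⟨fun ⟨hD, hfix⟩ => ⟨mem_box_of_memD hM hD, hfix⟩,
    fun ⟨hbox, hfix⟩ => ⟨memD_of_mem_box_of_isFixedPt hM hbox hfix, hfix⟩⟩

end SM

open SM in
/-- Theorem 2.3: the set of clearing solutions, i.e. fixed points of the
clearing map `Ψ^T` in the domain `𝔻^T`, is nonempty and forms a complete lattice under the
componentwise order; in particular it has greatest and least elements. -/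
theorem single_maturity_clearing_lattice
    {Ω : Type*} [Fintype Ω] [MeasurableSpace Ω] {n ℓ : ℕ}
    (M : SM Ω n ℓ) (𝓕 : Fin (ℓ+1) → MeasurableSpace Ω) (μ : MeasureTheory.Measure Ω)
    (hM : M.Valid 𝓕 μ) :
    LatticeStructure (M.clearingSet 𝓕 μ) := by
  rw [clearingSet_eq hM]
  exact latticeStructure_fixedPoints_Icc (boxLo_le_boxHi hM) (Ψmap_monotone hM) (mapsTo_Ψmap hM)

end Paper
end

section
/- Let (Ω, F, ℙ, (F_{t_l})_{l=0}^ℓ) be a finite filtered probability space with ℙ({ω}) > 0 for all ω, F_{t_0} = {∅, Ω}, F_{t_ℓ} = 2^Ω, and suppose every atom of F_{t_l} with l < ℓ contains exactly n+1 atoms of F_{t_{l+1}}. Let x̃ = (x̃(t_l))_{l=0}^ℓ be an ℝ^n-valued martingale such that for every l < ℓ and every atom ω of F_{t_l}, listing the n+1 successor atoms ω^{(1)}, ..., ω^{(n+1)} of ω, the n vectors (x̃_k(t_{l+1}, ω^{(1)}), ..., x̃_k(t_{l+1}, ω^{(n+1)})) ∈ ℝ^{n+1} for k = 1, ..., n together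 with the all-ones vector (1, ..., 1) ∈ ℝ^{n+1} are linearly independent. Then every real-valued martingale M = (M(t_l))_{l=0}^ℓ admits a predictable representation: there exists an adapted ℝ^n-valued process θ = (θ(t_l))_{l=0}^{ℓ−1} such that M(t_{l+1}) − M(t_l) = θ(t_l)ᵀ (x̃(t_{l+1}) − x̃(t_l)) for every l < ℓ. -/
/-!
On an atom of `𝓕 l`, the values of `1, xt_1, …, xt_n` on its `n + 1` successor atoms form a basis
of `ℝ^{n+1}`, so `Mart (l+1)` is an affine function `c + θ ⬝ xt (l+1)` on that atom, with `c` and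
`θ` depending only on the atom, hence `𝓕 l`-measurable. Pulling these predictable coefficients
out of the conditional expectation gives `Mart l = c + θ ⬝ xt l` almost surely, hence everywhere
as every point has positive mass; subtracting the two identities gives the representation.
-/

open MeasureTheory

namespace Paper

lemma atomOf_eq_measurableAtom {Ω : Type*} (m : MeasurableSpace Ω) (ω : Ω) :
    atomOf m ω = @measurableAtom Ω m ω := by
  ext x
  simpa [atomOf, measurableAtom] using forall_congr' fun _ => Imp.swap

end Paper

open MeasurableSpace Filter

section MeasurableAtom

variable {α β : Type*} [mα : MeasurableSpace α] [MeasurableSpace β]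

lemma Measurable.eq_of_mem_measurableAtom [MeasurableSingletonClass β] {f : α → β}
    (hf : Measurable f) {x y : α} (hy : y ∈ measurableAtom x) : f y = f x :=
  mem_of_mem_measurableAtom hy (hf (measurableSet_singleton (f x))) rfl

variable [Countable α]

lemma measurable_comp_measurableAtom (g : Set α → β) :
    Measurable fun x => g (measurableAtom x) := by
  intro s _
  have hunion : (fun x => g (measurableAtom x)) ⁻¹' s
      = ⋃ x ∈ (fun x => g (measurableAtom x)) ⁻¹' s, measurableAtom x := by
    ext y
    simp only [Set.mem_iUnion, Set.mem_preimage, exists_prop]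
    exact ⟨fun hy => ⟨y, hy, mem_measurableAtom_self y⟩,
      fun ⟨x, hx, hyx⟩ => by rwa [measurableAtom_eq_of_mem hyx]⟩
  rw [hunion]
  exact .biUnion (Set.to_countable _) fun x _ => .measurableAtom_of_countable x

lemma exists_measurable_forall_of_forall_measurableAtom [Nonempty β] {P : α → β → Prop}
    (h : ∀ x, ∃ b, ∀ y ∈ measurableAtom x, P y b) :
    ∃ g : α → β, Measurable g ∧ ∀ x, P x (g x) := by
  have hatom : ∀ A : Set α, ∃ b, ∀ x, measurableAtom x = A → P x b := by
    intro A
    by_cases hA : ∃ x₀, measurableAtom x₀ = A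
    · obtain ⟨x₀, rfl⟩ := hA
      obtain ⟨b, hb⟩ := h x₀
      exact ⟨b, fun x hx => hb x (hx ▸ mem_measurableAtom_self x)⟩
    · push Not at hA
      exact ⟨Classical.arbitrary β, fun x hx => absurd hx (hA x)⟩
  choose G hG using hatom
  exact ⟨fun x => G (measurableAtom x), measurable_comp_measurableAtom G, fun x => hG _ x rfl⟩

end MeasurableAtom

lemma exists_eq_const_add_sum_of_linearIndependent_cons {K ι : Type*} [Field K] [Fintype ι]
    {n : ℕ} (hcard : Fintype.card ι = n + 1) {v : Fin n → ι → K}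
    (hv : LinearIndependent K (Fin.cons (fun _ => 1) v : Fin (n + 1) → ι → K)) (y : ι → K) :
    ∃ (c : K) (θ : Fin n → K), ∀ i, y i = c + ∑ k, θ k * v k i := by
  have hspan := hv.span_eq_top_of_card_eq_finrank (by simp [hcard])
  obtain ⟨a, ha⟩ :=
    (Submodule.mem_span_range_iff_exists_fun K).1 (hspan ▸ Submodule.mem_top : y ∈ _)
  refine ⟨a 0, fun k => a k.succ, fun i => ?_⟩
  rw [← ha, Fin.sum_univ_succ]
  simp [Finset.sum_apply]

lemma Set.exists_fin_enum_image {α β : Type*} {f : α → β} {s : Set α} (hs : s.Finite) {N : ℕ}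
    (hN : (f '' s).ncard = N) :
    ∃ e : Fin N → α, (∀ j, e j ∈ s) ∧ Function.Injective (f ∘ e) ∧
      ∀ a ∈ s, ∃ j, f a = f (e j) := by
  have : Finite (f '' s) := (hs.image f).to_subtype
  obtain ⟨φ⟩ : Nonempty (Fin N ≃ f '' s) := by
    rw [← Finite.card_eq, Nat.card_eq_fintype_card, Fintype.card_fin, Nat.card_coe_set_eq, hN]
  choose e he hfe using fun j => (φ j).2
  refine ⟨e, he, fun j j' hjj' => φ.injective (Subtype.ext ?_), fun a ha => ?_⟩
  · simpa only [Function.comp_apply, hfe] using hjj'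
  · exact ⟨φ.symm ⟨f a, Set.mem_image_of_mem f ha⟩, by simp [hfe]⟩

lemma condExp_add_sum_mul_ae_eq {Ω ι : Type*} {m mΩ : MeasurableSpace Ω} {μ : Measure Ω}
    [IsFiniteMeasure μ] (hm : m ≤ mΩ) {s : Finset ι} {c : Ω → ℝ} {θ y : ι → Ω → ℝ}
    (hc : StronglyMeasurable[m] c) (hθ : ∀ k, StronglyMeasurable[m] (θ k))
    (hc_int : Integrable c μ) (hθy_int : ∀ k, Integrable (θ k * y k) μ)
    (hy_int : ∀ k, Integrable (y k) μ) :
    μ[c + ∑ k ∈ s, θ k * y k | m] =ᵐ[μ] c + ∑ k ∈ s, θ k * μ[y k | m] := by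
  calc μ[c + ∑ k ∈ s, θ k * y k | m]
      =ᵐ[μ] μ[c | m] + μ[∑ k ∈ s, θ k * y k | m] :=
        condExp_add hc_int (integrable_finsetSum' _ fun k _ => hθy_int k) m
    _ =ᵐ[μ] c + ∑ k ∈ s, μ[θ k * y k | m] := by
        rw [condExp_of_stronglyMeasurable hm hc hc_int]
        exact (EventuallyEq.refl _ c).add (condExp_finsetSum (fun k _ => hθy_int k) m)
    _ =ᵐ[μ] c + ∑ k ∈ s, θ k * μ[y k | m] :=
        (EventuallyEq.refl _ c).add (eventuallyEq_sum fun k _ =>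
          condExp_mul_of_stronglyMeasurable_left (hθ k) (hθy_int k) (hy_int k))

namespace Paper

section OneStep

variable {Ω : Type*} [Finite Ω] {m m' : MeasurableSpace Ω} {n : ℕ} {x' : Ω → Fin n → ℝ}
  {M' : Ω → ℝ}

lemma exists_affine_repr_on_atom {ω : Ω}
    (hcard : {A : Set Ω | ∃ ω' ∈ atomOf m ω, A = atomOf m' ω'}.ncard = n + 1)
    (hLI : ∀ e : Fin (n + 1) → Ω, (∀ j, e j ∈ atomOf m ω) →
      (∀ j j', j ≠ j' → atomOf m' (e j) ≠ atomOf m' (e j')) →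
      LinearIndependent ℝ
        (Fin.cons (fun _ : Fin (n + 1) => (1 : ℝ)) (fun k j => x' (e j) k)))
    (hx' : ∀ k, Measurable[m'] fun ω => x' ω k) (hM' : Measurable[m'] M') :
    ∃ (c : ℝ) (θ : Fin n → ℝ), ∀ ω' ∈ atomOf m ω, M' ω' = c + ∑ k, θ k * x' ω' k := by
  have himage : {A : Set Ω | ∃ ω' ∈ atomOf m ω, A = atomOf m' ω'}
      = atomOf m' '' atomOf m ω := by
    ext; simp [eq_comm]
  obtain ⟨e, he_mem, he_inj, he_cover⟩ :=
    Set.exists_fin_enum_image (Set.toFinite _) (himage ▸ hcard)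
  obtain ⟨c, θ, hcθ⟩ := exists_eq_const_add_sum_of_linearIndependent_cons (Fintype.card_fin _)
    (hLI e he_mem fun j j' hne => he_inj.ne hne) (fun j => M' (e j))
  refine ⟨c, θ, fun ω' hω' => ?_⟩
  obtain ⟨j, hj⟩ := he_cover ω' hω'
  have hmem : ω' ∈ @measurableAtom Ω m' (e j) := by
    rw [← atomOf_eq_measurableAtom, ← hj, atomOf_eq_measurableAtom]
    exact mem_measurableAtom_self ω'
  rw [hM'.eq_of_mem_measurableAtom hmem, hcθ j]
  simp only [(hx' _).eq_of_mem_measurableAtom hmem]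

lemma exists_predictable_affine_repr
    (hcard : ∀ ω : Ω, {A : Set Ω | ∃ ω' ∈ atomOf m ω, A = atomOf m' ω'}.ncard = n + 1)
    (hLI : ∀ (ω : Ω) (e : Fin (n + 1) → Ω), (∀ j, e j ∈ atomOf m ω) →
      (∀ j j', j ≠ j' → atomOf m' (e j) ≠ atomOf m' (e j')) →
      LinearIndependent ℝ
        (Fin.cons (fun _ : Fin (n + 1) => (1 : ℝ)) (fun k j => x' (e j) k)))
    (hx' : ∀ k, Measurable[m'] fun ω => x' ω k) (hM' : Measurable[m'] M') :
    ∃ (c : Ω → ℝ) (θ : Ω → Fin n → ℝ), Measurable[m] c ∧ (∀ k, Measurable[m] fun ω => θ ω k) ∧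
      ∀ ω, M' ω = c ω + ∑ k, θ ω k * x' ω k := by
  obtain ⟨g, hg, hg_repr⟩ := exists_measurable_forall_of_forall_measurableAtom (mα := m)
    (P := fun ω (p : ℝ × (Fin n → ℝ)) => M' ω = p.1 + ∑ k, p.2 k * x' ω k) fun ω => by
      obtain ⟨c, θ, h⟩ := exists_affine_repr_on_atom (hcard ω) (hLI ω) hx' hM'
      exact ⟨(c, θ), by simpa only [atomOf_eq_measurableAtom] using h⟩
  exact ⟨fun ω => (g ω).1, fun ω => (g ω).2, hg.fst,
    fun k => (measurable_pi_apply k).comp hg.snd, hg_repr⟩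

end OneStep

theorem exists_predictable_increment_repr {Ω : Type*} [Finite Ω] {m m' : MeasurableSpace Ω}
    [mΩ : MeasurableSpace Ω] [MeasurableSingletonClass Ω] (hm : m ≤ mΩ) {μ : Measure Ω}
    [IsFiniteMeasure μ] (hpos : ∀ ω, 0 < μ {ω}) {n : ℕ}
    (hcard : ∀ ω : Ω, {A : Set Ω | ∃ ω' ∈ atomOf m ω, A = atomOf m' ω'}.ncard = n + 1)
    {x x' : Ω → Fin n → ℝ}
    (hLI : ∀ (ω : Ω) (e : Fin (n + 1) → Ω), (∀ j, e j ∈ atomOf m ω) →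
      (∀ j j', j ≠ j' → atomOf m' (e j) ≠ atomOf m' (e j')) →
      LinearIndependent ℝ
        (Fin.cons (fun _ : Fin (n + 1) => (1 : ℝ)) (fun k j => x' (e j) k)))
    (hx' : ∀ k, Measurable[m'] fun ω => x' ω k)
    (hx_mart : ∀ k, μ[fun ω => x' ω k | m] = fun ω => x ω k)
    {M M' : Ω → ℝ} (hM' : Measurable[m'] M') (hM_mart : μ[M' | m] = M) :
    ∃ θ : Ω → Fin n → ℝ, (∀ k, Measurable[m] fun ω => θ ω k) ∧
      ∀ ω, M' ω - M ω = ∑ k, θ ω k * (x' ω k - x ω k) := by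
  obtain ⟨c, θ, hc, hθ, hrepr⟩ := exists_predictable_affine_repr hcard hLI hx' hM'
  have hM'_eq : M' = c + ∑ k, (fun ω => θ ω k) * fun ω => x' ω k := by
    ext ω
    simp [hrepr ω]
  have hM_ae : M =ᵐ[μ] c + ∑ k, (fun ω => θ ω k) * fun ω => x ω k := by
    rw [← hM_mart, hM'_eq]
    simpa only [hx_mart] using condExp_add_sum_mul_ae_eq (μ := μ) (y := fun k ω => x' ω k) hm
      hc.stronglyMeasurable (fun k => (hθ k).stronglyMeasurable) .of_finite
      (fun _ => .of_finite) (fun _ => .of_finite)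
  have hM_eq : ∀ ω, M ω = c ω + ∑ k, θ ω k * x ω k := fun ω => by
    simpa using ae_iff_of_countable.1 hM_ae ω (hpos ω).ne'
  refine ⟨θ, hθ, fun ω => ?_⟩
  rw [hrepr ω, hM_eq ω]
  simp only [mul_sub, Finset.sum_sub_distrib]
  ring

theorem martingale_representation_tree_general
    {Ω : Type*} [Fintype Ω] [MeasurableSpace Ω]
    (hTop : (inferInstance : MeasurableSpace Ω) = ⊤)
    (μ : Measure Ω) [IsProbabilityMeasure μ] (hpos : ∀ ω : Ω, 0 < μ {ω})
    (n ℓ : ℕ)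
    (𝓕 : Fin (ℓ+1) → MeasurableSpace Ω)
    (hbranch : ∀ (l : Fin ℓ) (ω : Ω),
      Set.ncard {A : Set Ω | ∃ ω' ∈ atomOf (𝓕 l.castSucc) ω, A = atomOf (𝓕 l.succ) ω'}
        = n + 1)
    (xt : Fin (ℓ+1) → Ω → Fin n → ℝ)
    (hxt_adapted : ∀ l k, Measurable[𝓕 l] fun ω => xt l ω k)
    (hxt_mart : ∀ (l : Fin ℓ) (k : Fin n) (ω : Ω),
      (μ[fun ω' => xt l.succ ω' k | 𝓕 l.castSucc]) ω = xt l.castSucc ω k)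
    (hLI : ∀ (l : Fin ℓ) (ω : Ω) (e : Fin (n+1) → Ω),
      (∀ j, e j ∈ atomOf (𝓕 l.castSucc) ω) →
      (∀ j j', j ≠ j' → atomOf (𝓕 l.succ) (e j) ≠ atomOf (𝓕 l.succ) (e j')) →
      LinearIndependent ℝ
        (Fin.cons (fun _ : Fin (n+1) => (1:ℝ))
          (fun (k : Fin n) (j : Fin (n+1)) => xt l.succ (e j) k)))
    (Mart : Fin (ℓ+1) → Ω → ℝ)
    (hM_adapted : ∀ l, Measurable[𝓕 l] (Mart l))
    (hM_mart : ∀ (l : Fin ℓ) (ω : Ω),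
      (μ[Mart l.succ | 𝓕 l.castSucc]) ω = Mart l.castSucc ω) :
    ∃ θ : Fin ℓ → Ω → Fin n → ℝ,
      (∀ l k, Measurable[𝓕 l.castSucc] fun ω => θ l ω k) ∧
      ∀ (l : Fin ℓ) (ω : Ω),
        Mart l.succ ω - Mart l.castSucc ω
          = ∑ k, θ l ω k * (xt l.succ ω k - xt l.castSucc ω k) := by
  have : MeasurableSingletonClass Ω := ⟨fun _ => hTop.ge _ measurableSet_top⟩
  choose θ hθ_pred hθ_repr using fun l : Fin ℓ =>
    exists_predictable_increment_repr (le_top.trans hTop.ge) hpos (hbranch l) (hLI l)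
      (hxt_adapted l.succ) (fun k => funext (hxt_mart l k)) (hM_adapted l.succ)
      (funext (hM_mart l))
  exact ⟨θ, hθ_pred, hθ_repr⟩

/-- predictable representation on a multinomial tree: on a finite filtered
probability space in which every atom of `𝓕 l` (for `l < ℓ`) splits into exactly `n+1` atoms
of `𝓕 (l+1)`, if the `ℝ^n`-valued martingale `xt` is such that, on each atom, the `n` vectors
of next-period values of its components together with the all-ones vector of `ℝ^{n+1}` are
linearly independent, then every real-valued martingale `Mart` admits a predictable
representation `ΔMart(t_l) = θ(t_l)ᵀ Δxt(t_l)` with `θ` adapted. -/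
theorem martingale_representation_tree
    {Ω : Type*} [Fintype Ω] [MeasurableSpace Ω]
    (hTop : (inferInstance : MeasurableSpace Ω) = ⊤)
    (μ : Measure Ω) [IsProbabilityMeasure μ] (hpos : ∀ ω : Ω, 0 < μ {ω})
    (n ℓ : ℕ)
    (𝓕 : Fin (ℓ+1) → MeasurableSpace Ω) (hmono : Monotone 𝓕)
    (h𝓕0 : 𝓕 0 = ⊥) (h𝓕last : 𝓕 (Fin.last ℓ) = (inferInstance : MeasurableSpace Ω))
    (hbranch : ∀ (l : Fin ℓ) (ω : Ω),
      Set.ncard {A : Set Ω | ∃ ω' ∈ atomOf (𝓕 l.castSucc) ω, A = atomOf (𝓕 l.succ) ω'}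
        = n + 1)
    (xt : Fin (ℓ+1) → Ω → Fin n → ℝ)
    (hxt_adapted : ∀ l k, Measurable[𝓕 l] fun ω => xt l ω k)
    (hxt_mart : ∀ (l : Fin ℓ) (k : Fin n) (ω : Ω),
      (μ[fun ω' => xt l.succ ω' k | 𝓕 l.castSucc]) ω = xt l.castSucc ω k)
    (hLI : ∀ (l : Fin ℓ) (ω : Ω) (e : Fin (n+1) → Ω),
      (∀ j, e j ∈ atomOf (𝓕 l.castSucc) ω) →
      (∀ j j', j ≠ j' → atomOf (𝓕 l.succ) (e j) ≠ atomOf (𝓕 l.succ) (e j')) →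
      LinearIndependent ℝ
        (Fin.cons (fun _ : Fin (n+1) => (1:ℝ))
          (fun (k : Fin n) (j : Fin (n+1)) => xt l.succ (e j) k)))
    (Mart : Fin (ℓ+1) → Ω → ℝ)
    (hM_adapted : ∀ l, Measurable[𝓕 l] (Mart l))
    (hM_mart : ∀ (l : Fin ℓ) (ω : Ω),
      (μ[Mart l.succ | 𝓕 l.castSucc]) ω = Mart l.castSucc ω) :
    ∃ θ : Fin ℓ → Ω → Fin n → ℝ,
      (∀ l k, Measurable[𝓕 l.castSucc] fun ω => θ l ω k) ∧
      ∀ (l : Fin ℓ) (ω : Ω),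
        Mart l.succ ω - Mart l.castSucc ω
          = ∑ k, θ l ω k * (xt l.succ ω k - xt l.castSucc ω k) :=
  martingale_representation_tree_general hTop μ hpos n ℓ 𝓕 hbranch xt hxt_adapted hxt_mart hLI Mart
    hM_adapted hM_mart

end Paper
end

section
/- A triple (K, P, τ) ∈ 𝔻^T is a fixed point of Ψ^T if and only if P is a fixed point of the forward-backward equation P = [Ψ̄^T_P(t_l, P(t_{(l+1)∧ℓ}), Ψ^T_τ((Ψ^T_K(t_k, P(t_k)))_{k=0}^ℓ))]_{l=0}^ℓ with K = (Ψ^T_K(t_l, P(t_l)))_{l=0}^ℓ and τ = Ψ^T_τ((Ψ^T_K(t_l, P(t_l)))_{l=0}^ℓ). -/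
open MeasureTheory

namespace Paper

/-- index `(l+1) ∧ ℓ` -/
def nextIdx {ℓ : ℕ} (l : Fin (ℓ+1)) : Fin (ℓ+1) := ⟨min (l.val + 1) ℓ, by omega⟩

namespace SM

open Classical in
/-- the backward-recursion survival component `Ψ̄^T_P`: at the terminal time it is the
indicator `1{τ_i > T}`; before the terminal time it is the conditional average, over the
current atom of `𝓕 l`, of the next-period survival probabilities `Pnext` (the sum over
successor atoms `Σ ℙ(ω_{l+1}) P_i(t_{l+1}, ω_{l+1}) / ℙ(ω_l)`, written as a sum over points
of the atom, to which it is identical for `𝓕 (l+1)`-measurable `Pnext`). -/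
noncomputable def Ψbar_P [MeasurableSpace Ω] [Fintype Ω] (M : SM Ω n ℓ)
    (𝓕 : Fin (ℓ+1) → MeasurableSpace Ω) (μ : MeasureTheory.Measure Ω)
    (Pnext : Ω → Fin n → ℝ) (τ : Fin n → Ω → ℝ)
    (l : Fin (ℓ+1)) (ω : Ω) (i : Fin n) : ℝ :=
  if l = Fin.last ℓ then indR (M.T < τ i ω)
  else
    (∑ ω' ∈ Finset.univ.filter (fun ω' => ω' ∈ atomOf (𝓕 l) ω),
        (μ {ω'}).toReal * Pnext ω' i) / (μ (atomOf (𝓕 l) ω)).toReal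

/-- the recursive clearing map `Ψ̄^T`: same as `Ψ^T` in the `K` and `τ` components, with the
`P` component replaced by the backward recursion `Ψ̄^T_P` -/
noncomputable def Ψbar [MeasurableSpace Ω] [Fintype Ω] (M : SM Ω n ℓ)
    (𝓕 : Fin (ℓ+1) → MeasurableSpace Ω) (μ : MeasureTheory.Measure Ω)
    (z : Tri Ω n ℓ) : Tri Ω n ℓ :=
  (fun l ω i => M.ΨK l (z.2.1 l) ω i,
   fun l ω i => M.Ψbar_P 𝓕 μ (z.2.1 (nextIdx l)) z.2.2 l ω i,
   fun i ω => M.Ψτ z.1 i ω)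

end SM

/-!
On a finite space charging every point, the conditional expectation given `𝓕 l` at `ω` is the
`μ`-average over the `𝓕 l`-atom of `ω`, and `𝓕 ℓ` is the full σ-algebra. By the tower property
the survival process `ℙ(τ_i > T | 𝓕 l)` therefore solves the backward recursion `Ψ̄^T_P`, and by
backward induction it is its only solution. Once `K` and `τ` are pinned to their `Ψ^T`-values,
the `P`-component of the fixed-point equation of `Ψ^T` is thus equivalent to the recursion.
-/

section Atoms

variable {Ω : Type*} {m : MeasurableSpace Ω} {ω ω' : Ω}

theorem mem_atomOf (m : MeasurableSpace Ω) (ω : Ω) : ω ∈ atomOf m ω :=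
  fun _ hs => hs.2

theorem atomOf_subset {s : Set Ω} (hs : MeasurableSet[m] s) (hω : ω ∈ s) :
    atomOf m ω ⊆ s :=
  Set.sInter_subset_of_mem ⟨hs, hω⟩

theorem measurableSet_atomOf [Finite Ω] (m : MeasurableSpace Ω) (ω : Ω) :
    MeasurableSet[m] (atomOf m ω) :=
  .sInter (Set.to_countable _) fun _ hs => hs.1

theorem Measurable.eq_of_mem_atomOf {β : Type*} [MeasurableSpace β]
    [MeasurableSingletonClass β] {g : Ω → β} (hg : Measurable[m] g)
    (h : ω' ∈ atomOf m ω) : g ω' = g ω :=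
  atomOf_subset (hg (measurableSet_singleton (g ω))) rfl h

end Atoms

section AtomAverage

variable {Ω : Type*} [Fintype Ω] {m m₀ : MeasurableSpace Ω} {μ : Measure Ω}

open Classical in
noncomputable def atomAvg (m : MeasurableSpace Ω) {_ : MeasurableSpace Ω} (μ : Measure Ω)
    (f : Ω → ℝ) (ω : Ω) : ℝ :=
  (∑ ω' ∈ Finset.univ.filter (fun ω' => ω' ∈ atomOf m ω), (μ {ω'}).toReal * f ω') /
    (μ (atomOf m ω)).toReal

theorem condExp_apply_eq_atomAvg [MeasurableSingletonClass Ω] [IsFiniteMeasure μ]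
    (hm : m ≤ m₀) (f : Ω → ℝ) {ω : Ω} (hω : μ (atomOf m ω) ≠ 0) :
    μ[f|m] ω = atomAvg m μ f ω := by
  classical
  have hconst : Set.EqOn (μ[f|m]) (fun _ => μ[f|m] ω) (atomOf m ω) := fun _ h =>
    Measurable.eq_of_mem_atomOf stronglyMeasurable_condExp.measurable h
  have hint : μ.real (atomOf m ω) • μ[f|m] ω =
      ∑ ω' ∈ Finset.univ.filter (· ∈ atomOf m ω), μ.real {ω'} • f ω' := by
    rw [← setIntegral_const, ← setIntegral_congr_fun (Set.toFinite _).measurableSet hconst,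
      setIntegral_condExp hm Integrable.of_finite (measurableSet_atomOf m ω),
      ← setIntegral_finset _ Integrable.of_finite.integrableOn, Finset.coe_filter_univ,
      Set.ofPred_mem_eq]
  exact (eq_div_iff (ENNReal.toReal_ne_zero.2 ⟨hω, measure_ne_top μ _⟩)).2
    ((mul_comm _ _).trans hint)

end AtomAverage

theorem eq_of_ae_eq_of_forall_measure_singleton_ne_zero {Ω β : Type*} [MeasurableSpace Ω]
    [Countable Ω] {μ : Measure Ω} (hμ : ∀ ω, μ {ω} ≠ 0) {f g : Ω → β} (h : f =ᵐ[μ] g) :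
    f = g :=
  funext fun ω => ae_iff_of_countable.1 h ω (hμ ω)

theorem nextIdx_castSucc {ℓ : ℕ} (j : Fin ℓ) : nextIdx j.castSucc = j.succ := by
  ext; simp [nextIdx]

namespace SM

variable {Ω : Type*} [MeasurableSpace Ω] {n ℓ : ℕ} {M : SM Ω n ℓ}
  {𝓕 : Fin (ℓ+1) → MeasurableSpace Ω} {μ : Measure Ω}

theorem Valid.discreteMeasurableSpace (hM : M.Valid 𝓕 μ) : DiscreteMeasurableSpace Ω :=
  ⟨fun s => hM.hTop.ge s trivial⟩

theorem Valid.le (hM : M.Valid 𝓕 μ) (l : Fin (ℓ+1)) : 𝓕 l ≤ ‹MeasurableSpace Ω› :=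
  (hM.hmono (Fin.le_last l)).trans_eq hM.hlast

theorem Valid.ΨP_last [Finite Ω] (hM : M.Valid 𝓕 μ) (τ : Fin n → Ω → ℝ) (ω : Ω) (i : Fin n) :
    M.ΨP 𝓕 μ τ (Fin.last ℓ) ω i = indR (M.T < τ i ω) := by
  have := hM.discreteMeasurableSpace
  have := hM.hprob
  rw [ΨP, condExp_of_stronglyMeasurable (hM.le _) (hM.hlast ▸ .of_discrete) Integrable.of_finite]

theorem Valid.ΨP_castSucc [Fintype Ω] (hM : M.Valid 𝓕 μ) (τ : Fin n → Ω → ℝ) (j : Fin ℓ)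
    (ω : Ω) (i : Fin n) :
    M.ΨP 𝓕 μ τ j.castSucc ω i =
      atomAvg (𝓕 j.castSucc) μ (fun ω' => M.ΨP 𝓕 μ τ j.succ ω' i) ω := by
  have := hM.discreteMeasurableSpace
  have := hM.hprob
  have hpos (ω : Ω) : μ {ω} ≠ 0 := (hM.hpos ω).ne'
  have htower := eq_of_ae_eq_of_forall_measure_singleton_ne_zero hpos
    (condExp_condExp_of_le (f := fun ω' => indR (M.T < τ i ω'))
      (hM.hmono (Fin.castSucc_le_succ j)) (hM.le j.succ))
  rw [ΨP, ← htower, condExp_apply_eq_atomAvg (hM.le _) _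
    (measure_mono_null (Set.singleton_subset_iff.2 (mem_atomOf _ ω)) |>.mt (hpos ω))]
  rfl

variable [Fintype Ω]

theorem Ψbar_P_last (Pnext : Ω → Fin n → ℝ) (τ : Fin n → Ω → ℝ) (ω : Ω) (i : Fin n) :
    M.Ψbar_P 𝓕 μ Pnext τ (Fin.last ℓ) ω i = indR (M.T < τ i ω) :=
  if_pos rfl

theorem Ψbar_P_castSucc (Pnext : Ω → Fin n → ℝ) (τ : Fin n → Ω → ℝ) (j : Fin ℓ) (ω : Ω)
    (i : Fin n) :
    M.Ψbar_P 𝓕 μ Pnext τ j.castSucc ω i = atomAvg (𝓕 j.castSucc) μ (fun ω' => Pnext ω' i) ω :=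
  if_neg (Fin.castSucc_ne_last j)

theorem Valid.eq_ΨP_iff_backward (hM : M.Valid 𝓕 μ) {P : Fin (ℓ+1) → Ω → Fin n → ℝ}
    {τ : Fin n → Ω → ℝ} :
    P = M.ΨP 𝓕 μ τ ↔ P = fun l ω i => M.Ψbar_P 𝓕 μ (P (nextIdx l)) τ l ω i := by
  constructor
  · rintro rfl
    funext l ω i
    induction l using Fin.lastCases with
    | last => rw [Ψbar_P_last, hM.ΨP_last]
    | cast j => rw [nextIdx_castSucc, Ψbar_P_castSucc, hM.ΨP_castSucc]
  · intro h
    funext l ω i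
    induction l using Fin.reverseInduction generalizing ω with
    | last => rw [congrFun₃ h, Ψbar_P_last, hM.ΨP_last]
    | cast j ih =>
      rw [congrFun₃ h, nextIdx_castSucc, Ψbar_P_castSucc, hM.ΨP_castSucc]
      simp only [ih]

end SM

open SM in
theorem clearing_iff_forward_backward_general
    {Ω : Type*} [Fintype Ω] [MeasurableSpace Ω] {n ℓ : ℕ}
    (M : SM Ω n ℓ) (𝓕 : Fin (ℓ+1) → MeasurableSpace Ω) (μ : MeasureTheory.Measure Ω)
    (hM : M.Valid 𝓕 μ)
    (z : Tri Ω n ℓ) :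
    M.Ψmap 𝓕 μ z = z ↔
      ((z.2.1 = fun l ω i =>
          M.Ψbar_P 𝓕 μ (z.2.1 (nextIdx l))
            (fun i' ω' => M.Ψτ (fun k ω'' i'' => M.ΨK k (z.2.1 k) ω'' i'') i' ω') l ω i) ∧
        z.1 = (fun l ω i => M.ΨK l (z.2.1 l) ω i) ∧
        z.2.2 = fun i ω => M.Ψτ (fun k ω' i' => M.ΨK k (z.2.1 k) ω' i') i ω) := by
  obtain ⟨K, P, τ⟩ := z
  simp only [Ψmap, Prod.mk.injEq]
  constructor
  · rintro ⟨rfl, hP, rfl⟩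
    exact ⟨hM.eq_ΨP_iff_backward.1 hP.symm, rfl, rfl⟩
  · rintro ⟨hP, rfl, rfl⟩
    exact ⟨rfl, (hM.eq_ΨP_iff_backward.2 hP).symm, rfl⟩

open SM in
/-- Corollary 2.9: a triple `(K, P, τ) ∈ 𝔻^T` is a fixed point of `Ψ^T`
if and only if `P` is a fixed point of the forward-backward equation, where the capital is
computed forward from `P` via `Ψ^T_K`, the default times are `Ψ^T_τ` of that capital, and
the survival probabilities are recovered backward via `Ψ̄^T_P`. -/
theorem clearing_iff_forward_backward
    {Ω : Type*} [Fintype Ω] [MeasurableSpace Ω] {n ℓ : ℕ}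
    (M : SM Ω n ℓ) (𝓕 : Fin (ℓ+1) → MeasurableSpace Ω) (μ : MeasureTheory.Measure Ω)
    (hM : M.Valid 𝓕 μ)
    (z : Tri Ω n ℓ) (hz : M.memD 𝓕 z.1 z.2.1 z.2.2) :
    M.Ψmap 𝓕 μ z = z ↔
      ((z.2.1 = fun l ω i =>
          M.Ψbar_P 𝓕 μ (z.2.1 (nextIdx l))
            (fun i' ω' => M.Ψτ (fun k ω'' i'' => M.ΨK k (z.2.1 k) ω'' i'') i' ω') l ω i) ∧
        z.1 = (fun l ω i => M.ΨK l (z.2.1 l) ω i) ∧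
        z.2.2 = fun i ω => M.Ψτ (fun k ω' i' => M.ΨK k (z.2.1 k) ω' i') i ω) :=
  clearing_iff_forward_backward_general M 𝓕 μ hM z

end Paper
end
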